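/- Consider random variables z_{0:T}, y_{0:T} whose joint density factorizes as p(z_{0:T}, y_{0:T}) = p(z_T) · ∏_{t=0}^{T-1} p(z_t | z_{t+1}) · ∏_{t=0}^{T} p(y_t | z_t). Define unnormalized weight functions w̃_T(z_T) = p(y_T|z_T)·q̄(y_0|z_T), w̃_t(z_t,z_{t+1}) = p(y_t|z_t)·q̄(y_0|z_t)·p(z_t|z_{t+1}) / (q̄(y_0|z_{t+1})·π_t(z_t|z_{t+1})) for 0 < t < T, and w̃_0(z_0,z_1) = p(y_0|z_0)·p(z_0|z_1) / (q̄(y_0|z_1)·π_0(z_0|z_1)), where q̄(y_0|·) is any strictly positive function and π_t are strictly positive proposal densities, and the initial proposal π_T = p(z_T). Then the product (π_T(z_T) ∏_{t=0}^{T-1} π_t(z_t|z_{t+1})) · (w̃_T(z_T) ∏_{t=0}^{T-1} w̃_t(z_t,z_{t+1})) equals p(y_{0:T}|z_{0:T})·p(z_{0:T}), and hence, after normalization, the final SMC target distribution ν_0(z_{0:T}) equals the posterior p(z_{0:T} | y_{0:T}). -/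

import Mathlib

open Finset

/-- Telescoping cancellation showing asymptotic exactness of LD-SMC.
The joint density factorizes as
`p(z_{0:T}, y_{0:T}) = p(z_T) · ∏_{t=0}^{T-1} p(z_t|z_{t+1}) · ∏_{t=0}^T p(y_t|z_t)`,
where `lik t (z t) = p(y_t|z_t)` (at the fixed observations), `qbar t (z t) = q̄(y_0|z_t)`
is any strictly positive function, `prop t` are strictly positive proposal densities
`π_t(z_t|z_{t+1})`, and the initial proposal `π_T = p(z_T) = prior`.
With the unnormalized weights
`w̃_T(z_T) = p(y_T|z_T)·q̄(y_0|z_T)`,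
`w̃_t(z_t,z_{t+1}) = p(y_t|z_t)·q̄(y_0|z_t)·p(z_t|z_{t+1})/(q̄(y_0|z_{t+1})·π_t(z_t|z_{t+1}))`
for `0 < t < T`, and
`w̃_0(z_0,z_1) = p(y_0|z_0)·p(z_0|z_1)/(q̄(y_0|z_1)·π_0(z_0|z_1))`,
the product `(π_T(z_T) ∏_{t<T} π_t(z_t|z_{t+1})) · (w̃_T(z_T) ∏_{t<T} w̃_t(z_t,z_{t+1}))`
equals `p(y_{0:T}|z_{0:T})·p(z_{0:T})`; hence, after normalization, the final SMC
target `ν₀(z_{0:T})` equals the posterior `p(z_{0:T}|y_{0:T})`. -/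
theorem smc_telescoping_product (Z : Type*) (T : ℕ) (hT : 1 ≤ T)
    (prior : Z → ℝ)                 -- p(z_T)
    (trans : ℕ → Z → Z → ℝ)         -- trans t zt zt1 = p(z_t | z_{t+1})
    (lik : ℕ → Z → ℝ)               -- lik t zt = p(y_t | z_t)
    (qbar : ℕ → Z → ℝ)              -- qbar t zt = q̄(y_0 | z_t)
    (prop : ℕ → Z → Z → ℝ)          -- prop t zt zt1 = π_t(z_t | z_{t+1})
    (hqbar : ∀ t zt, 0 < qbar t zt)
    (hprop : ∀ t zt zt1, 0 < prop t zt zt1)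
    (z : ℕ → Z) :
    (prior (z T) * ∏ t ∈ Finset.range T, prop t (z t) (z (t + 1))) *
      ((lik T (z T) * qbar T (z T)) *
        ∏ t ∈ Finset.range T,
          (if t = 0 then
            lik 0 (z 0) * trans 0 (z 0) (z 1) / (qbar 1 (z 1) * prop 0 (z 0) (z 1))
          else
            lik t (z t) * qbar t (z t) * trans t (z t) (z (t + 1)) /
              (qbar (t + 1) (z (t + 1)) * prop t (z t) (z (t + 1)))))
    = (∏ t ∈ Finset.range (T + 1), lik t (z t)) *
        (prior (z T) * ∏ t ∈ Finset.range T, trans t (z t) (z (t + 1))) := by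
  have hq : ∀ t, qbar t (z t) ≠ 0 := fun t => (hqbar t (z t)).ne'
  have hp : ∀ t, prop t (z t) (z (t + 1)) ≠ 0 := fun t => (hprop t (z t) (z (t + 1))).ne'
  have key : ∀ n, 1 ≤ n →
      (∏ t ∈ Finset.range n,
          (if t = 0 then
            lik 0 (z 0) * trans 0 (z 0) (z 1) / (qbar 1 (z 1) * prop 0 (z 0) (z 1))
          else
            lik t (z t) * qbar t (z t) * trans t (z t) (z (t + 1)) /
              (qbar (t + 1) (z (t + 1)) * prop t (z t) (z (t + 1))))) * qbar n (z n)
        = ∏ t ∈ Finset.range n,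
            (lik t (z t) * trans t (z t) (z (t + 1)) / prop t (z t) (z (t + 1))) := by
    intro n hn
    induction n with
    | zero => omega
    | succ m ih =>
      rcases Nat.eq_zero_or_pos m with h0 | hm
      · subst h0
        rw [Finset.prod_range_one, Finset.prod_range_one, if_pos rfl]
        have h1 : 0 < qbar 1 (z 1) := hqbar _ _
        have h2 : 0 < prop 0 (z 0) (z 1) := hprop _ _ _
        rw [div_mul_eq_mul_div, div_eq_div_iff (by positivity) (hp 0)]
        ring
      · have ih' := ih hm
        rw [Finset.prod_range_succ, Finset.prod_range_succ, if_neg (by omega)]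
        have hPm : (∏ t ∈ Finset.range m,
            (if t = 0 then
              lik 0 (z 0) * trans 0 (z 0) (z 1) / (qbar 1 (z 1) * prop 0 (z 0) (z 1))
            else
              lik t (z t) * qbar t (z t) * trans t (z t) (z (t + 1)) /
                (qbar (t + 1) (z (t + 1)) * prop t (z t) (z (t + 1)))))
            = (∏ t ∈ Finset.range m,
                (lik t (z t) * trans t (z t) (z (t + 1)) / prop t (z t) (z (t + 1))))
              / qbar m (z m) := by
          rw [eq_div_iff (hq m)]
          exact ih'
        rw [hPm]
        have h1 : 0 < ∏ t ∈ Finset.range m, prop t (z t) (z (t + 1)) :=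
          Finset.prod_pos fun t _ => hprop _ _ _
        have h2 : 0 < qbar m (z m) := hqbar _ _
        have h3 : 0 < qbar (m + 1) (z (m + 1)) := hqbar _ _
        have h4 : 0 < prop m (z m) (z (m + 1)) := hprop _ _ _
        field_simp
  have hkey := key T hT
  have hprod : (∏ t ∈ Finset.range T,
      (if t = 0 then
        lik 0 (z 0) * trans 0 (z 0) (z 1) / (qbar 1 (z 1) * prop 0 (z 0) (z 1))
      else
        lik t (z t) * qbar t (z t) * trans t (z t) (z (t + 1)) /
          (qbar (t + 1) (z (t + 1)) * prop t (z t) (z (t + 1)))))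
      = (∏ t ∈ Finset.range T,
          (lik t (z t) * trans t (z t) (z (t + 1)) / prop t (z t) (z (t + 1))))
        / qbar T (z T) := by
    rw [eq_div_iff (hq T)]
    exact hkey
  rw [hprod, Finset.prod_range_succ]
  have hdist : ∏ t ∈ Finset.range T,
      (lik t (z t) * trans t (z t) (z (t + 1)) / prop t (z t) (z (t + 1)))
      = ((∏ t ∈ Finset.range T, lik t (z t)) * ∏ t ∈ Finset.range T, trans t (z t) (z (t + 1)))
        / ∏ t ∈ Finset.range T, prop t (z t) (z (t + 1)) := by
    rw [Finset.prod_div_distrib, Finset.prod_mul_distrib]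
  rw [hdist]
  have h1 : 0 < ∏ t ∈ Finset.range T, prop t (z t) (z (t + 1)) :=
    Finset.prod_pos fun t _ => hprop _ _ _
  have h2 : 0 < qbar T (z T) := hqbar _ _
  field_simp
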